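/- arXiv:2311.06029 — 2 statements merged into one kernel-verified Lean document; each statement's English description precedes it below -/
import Mathlib

section
/- Let η₀,…,η_{n−1} be a probability distribution and A₀,…,A_{n−1} Hermitian operators with Tr A_i = η_i. Suppose H is Hermitian with H − A_i ⪰ 0 for all i and Tr H = q. Set Γ = Σ_i A_i and W_i = H − A_i. Then for every i and every positive integer L, Σ_{c ∈ Z_n^L, ω_n(c)=i} (W_{c₁} ⊗ ⋯ ⊗ W_{c_L}) − (−1)^L Σ_{c ∈ Z_n^L, ω_n(c)=i} (A_{c₁} ⊗ ⋯ ⊗ A_{c_L}) = (1/n)(nH − Γ)^{⊗L} − (−1)^L (1/n) Γ^{⊗L}, where ω_n(c) is the mod-n sum of the entries of c. -/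
/-! At the entry `(x, y)` put `h l = H (x l) (y l)` and `g l j = A j (x l) (y l)`. Both sides are then
built from iterated convolutions on `ℤ/n` evaluated at `i`: `P`, the convolution of the functions
`h l - g l ·`, and `Q`, that of the `g l ·`. The difference
`P i - (-1)^L Q i` does not depend on `i`: splitting off the first factor, `h 0` convolved with
anything is constant, and `-g 0 ·` convolved with the shorter `(-1)^(L-1) Q` plus a constant (by
induction) is `(-1)^L Q` plus a constant. A function constant in `i` is `1/n` times its sum over `i`,
and summing a convolution over all `i` gives the product of the sums. -/

open Matrix BigOperators Finset
open scoped ComplexOrder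

noncomputable def matAbs {d : Type*} [Fintype d] [DecidableEq d] (E : Matrix d d ℂ) : Matrix d d ℂ :=
  (Matrix.posSemidef_conjTranspose_mul_self E).1.eigenvectorUnitary.1 *
    diagonal ((↑) ∘ (√·) ∘ (Matrix.posSemidef_conjTranspose_mul_self E).1.eigenvalues) *
    (star (Matrix.posSemidef_conjTranspose_mul_self E).1.eigenvectorUnitary : Matrix d d ℂ)

noncomputable def tpow {d : Type*} (E : Matrix d d ℂ) (L : ℕ) :
    Matrix (Fin L → d) (Fin L → d) ℂ :=
  Matrix.of fun i j => ∏ l, E (i l) (j l)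

noncomputable def tfam {d : Type*} {L : ℕ} (A : Fin L → Matrix d d ℂ) :
    Matrix (Fin L → d) (Fin L → d) ℂ :=
  Matrix.of fun i j => ∏ l, A l (i l) (j l)

def pt {a b : Type*} (M : Matrix (a × b) (a × b) ℂ) : Matrix (a × b) (a × b) ℂ :=
  Matrix.of fun x y => M (x.1, y.2) (y.1, x.2)

section MultiConv

variable {G R : Type*} [AddCommGroup G] [Fintype G] [DecidableEq G] [CommRing R] {L : ℕ}

/-- The iterated convolution `(f 0 ∗ f 1 ∗ ⋯ ∗ f (L - 1)) i` of functions on a finite abelian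
group. -/
def multiConv (f : Fin L → G → R) (i : G) : R :=
  ∑ c ∈ univ.filter (fun c : Fin L → G => ∑ l, c l = i), ∏ l, f l (c l)

theorem multiConv_succ (f : Fin (L + 1) → G → R) (i : G) :
    multiConv f i = ∑ j, f 0 j * multiConv (fun l => f l.succ) (i - j) := by
  unfold multiConv
  rw [sum_filter, ← (Fin.consEquiv fun _ => G).sum_comp, Fintype.sum_prod_type]
  refine sum_congr rfl fun j _ => ?_
  rw [sum_filter, mul_sum]
  refine sum_congr rfl fun c _ => ?_
  simp [Fin.consEquiv, Fin.sum_univ_succ, Fin.prod_univ_succ, eq_sub_iff_add_eq', mul_ite]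

theorem sum_multiConv (f : Fin L → G → R) : ∑ i, multiConv f i = ∏ l, ∑ j, f l j := by
  rw [Fintype.prod_sum]
  exact sum_fiberwise univ _ _

theorem exists_multiConv_const_sub_eq (h : Fin L → R) (g : Fin L → G → R) :
    ∃ C, ∀ i, multiConv (fun l j => h l - g l j) i = (-1) ^ L * multiConv g i + C := by
  induction L with
  | zero => exact ⟨0, fun i => by simp [multiConv]⟩
  | succ L ih =>
    obtain ⟨C, hC⟩ := ih (fun l => h l.succ) (fun l => g l.succ)
    set Q := multiConv fun l => g l.succ
    have hQ : ∀ i, ∑ j, Q (i - j) = ∑ k, Q k := fun i => (Equiv.subLeft i).sum_comp Q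
    refine ⟨(-1) ^ L * h 0 * ∑ k, Q k + C * ∑ j, (h 0 - g 0 j), fun i => ?_⟩
    simp only [multiConv_succ, hC, ← hQ i, mul_sum, ← sum_add_distrib]
    refine sum_congr rfl fun j _ => ?_
    ring

theorem card_smul_multiConv_const_sub (h : Fin L → R) (g : Fin L → G → R) (i : G) :
    Fintype.card G • (multiConv (fun l j => h l - g l j) i - (-1) ^ L * multiConv g i) =
      ∏ l, (Fintype.card G • h l - ∑ j, g l j) - (-1) ^ L * ∏ l, ∑ j, g l j := by
  obtain ⟨C, hC⟩ := exists_multiConv_const_sub_eq h g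
  calc Fintype.card G • (multiConv (fun l j => h l - g l j) i - (-1) ^ L * multiConv g i)
      = ∑ i' : G, (multiConv (fun l j => h l - g l j) i' - (-1) ^ L * multiConv g i') := by
        simp [hC]
    _ = _ := by simp [sum_sub_distrib, ← mul_sum, sum_multiConv]

end MultiConv

open Fin.CommRing in
theorem Fin.val_sum {ι : Type*} {n : ℕ} [NeZero n] (s : Finset ι) (f : ι → Fin n) :
    (∑ l ∈ s, f l).val = (∑ l ∈ s, (f l).val) % n := by
  rw [← Fin.val_natCast, Nat.cast_sum]
  simp

theorem stmt_9_general {d : Type*} (n : ℕ) (A : Fin n → Matrix d d ℂ) (H : Matrix d d ℂ)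
    (L : ℕ) (i : Fin n) :
    (∑ c ∈ Finset.univ.filter (fun c : Fin L → Fin n => (∑ l, (c l).val) % n = (i : ℕ)),
        tfam (fun l => H - A (c l)))
      - (-1 : ℂ) ^ L •
        (∑ c ∈ Finset.univ.filter (fun c : Fin L → Fin n => (∑ l, (c l).val) % n = (i : ℕ)),
          tfam (fun l => A (c l)))
    = ((n : ℂ))⁻¹ • tpow ((n : ℂ) • H - ∑ j, A j) L
      - (-1 : ℂ) ^ L • (((n : ℂ))⁻¹ • tpow (∑ j, A j) L) := by
  have : NeZero n := NeZero.of_pos i.pos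
  simp only [← Fin.val_sum, Fin.val_inj]
  ext x y
  have key := card_smul_multiConv_const_sub (fun l => H (x l) (y l))
    (fun l j => A j (x l) (y l)) i
  simp only [Fintype.card_fin, nsmul_eq_mul] at key
  simp only [Matrix.sub_apply, Matrix.smul_apply, Matrix.sum_apply, tfam, tpow, of_apply,
    smul_eq_mul]
  rw [mul_left_comm, ← mul_sub, eq_inv_mul_iff_mul_eq₀ (NeZero.ne _)]
  exact key

/-- Lemma 1: with `Wᵢ = H - Aᵢ` and `Γ = Σᵢ Aᵢ`,
`Σ_{ω_n(c)=i} W_c - (-1)^L Σ_{ω_n(c)=i} A_c = (1/n)(nH-Γ)^{⊗L} - (-1)^L (1/n) Γ^{⊗L}`. -/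
theorem stmt_9 {d : Type*} [Fintype d] [DecidableEq d] (n : ℕ) (hn : 0 < n)
    (η : Fin n → ℝ) (hη : ∀ i, 0 ≤ η i) (hηsum : ∑ i, η i = 1)
    (A : Fin n → Matrix d d ℂ) (hA : ∀ i, (A i).IsHermitian)
    (hAtr : ∀ i, (A i).trace = (η i : ℂ))
    (H : Matrix d d ℂ) (hH : H.IsHermitian) (hHi : ∀ i, (H - A i).PosSemidef)
    (q : ℝ) (hq : H.trace = (q : ℂ))
    (L : ℕ) (hL : 0 < L) (i : Fin n) :
    (∑ c ∈ Finset.univ.filter (fun c : Fin L → Fin n => (∑ l, (c l).val) % n = (i : ℕ)),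
        tfam (fun l => H - A (c l)))
      - (-1 : ℂ) ^ L •
        (∑ c ∈ Finset.univ.filter (fun c : Fin L → Fin n => (∑ l, (c l).val) % n = (i : ℕ)),
          tfam (fun l => A (c l)))
    = ((n : ℂ))⁻¹ • tpow ((n : ℂ) • H - ∑ j, A j) L
      - (-1 : ℂ) ^ L • (((n : ℂ))⁻¹ • tpow (∑ j, A j) L) :=
  stmt_9_general n A H L i
end

section
/- Let A₀,…,A_{n−1} be Hermitian operators on a finite-dimensional Hilbert space with Σ_i Tr A_i = 1 and each Tr A_i ≥ 0, and suppose there exists a Hermitian H with H − A_i ⪰ 0 for all i and Tr H = q ≥ 1/n. For each i and L define B_i^(L) = Σ_{c ∈ Z_n^L, ω_n(c)=i} A_{c₁} ⊗ ⋯ ⊗ A_{c_L}. Then for any measurement {M_i}_{i=0}^{n−1}, Σ_i Tr(B_i^(L) M_i) ≤ 1/n + ((n−1)/n)(nq − 1)^L. -/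
open Matrix BigOperators Finset
open scoped ComplexOrder

/-!
The argument works over any finite abelian group `G` (here `Z_n = Fin n`). Put
`D j = H - A j ⪰ 0`, so `∑ j, Tr D j = |G| q - 1`, and expand the indicator of `∑ l, c l = g`
over the characters `ψ` of `G`. The trivial character contributes
`(∑ j, Tr A j)^L = 1`. For `ψ ≠ 0` we have `∑ j, ψ j = 0`, so `∑ j, ψ j A j = -∑ j, ψ j D j`;
its tensor power is a combination of the positive semidefinite matrices
`D_{c₁} ⊗ ⋯ ⊗ D_{c_L}` with unimodular coefficients, and pairing it against the measurement with
unimodular phases yields at most `(∑ j, Tr D j)^L = (|G| q - 1)^L`. Averaging over the `|G|`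
characters gives the bound.
-/

section TensorFamily

variable {d : Type*} {L : ℕ}

lemma tfam_conjTranspose (X : Fin L → Matrix d d ℂ) :
    tfam (fun l => (X l)ᴴ) = (tfam X)ᴴ := by
  ext i j
  simp [tfam, conjTranspose_apply]

lemma tfam_smul (a : Fin L → ℂ) (X : Fin L → Matrix d d ℂ) :
    tfam (fun l => a l • X l) = (∏ l, a l) • tfam X := by
  ext i j
  simp [tfam, prod_mul_distrib]

lemma tfam_sum {ι : Type*} [Fintype ι] (X : Fin L → ι → Matrix d d ℂ) :
    tfam (fun l => ∑ j, X l j) = ∑ c : Fin L → ι, tfam (fun l => X l (c l)) := by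
  ext i j
  simp only [tfam, of_apply, Matrix.sum_apply, prod_univ_sum, Fintype.piFinset_univ]

variable [Fintype d]

lemma tfam_mul (X Y : Fin L → Matrix d d ℂ) :
    tfam (fun l => X l * Y l) = tfam X * tfam Y := by
  ext i j
  simp only [tfam, mul_apply, of_apply, prod_univ_sum, Fintype.piFinset_univ, prod_mul_distrib]

lemma trace_tfam (X : Fin L → Matrix d d ℂ) : (tfam X).trace = ∏ l, (X l).trace := by
  simp only [trace, Matrix.diag, tfam, of_apply, prod_univ_sum, Fintype.piFinset_univ]

open scoped MatrixOrder in
lemma Matrix.PosSemidef.tfam {X : Fin L → Matrix d d ℂ} (hX : ∀ l, (X l).PosSemidef) :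
    (tfam X).PosSemidef := by
  classical
  choose Y hY using fun l => CStarAlgebra.nonneg_iff_eq_star_mul_self.mp (hX l).nonneg
  rw [funext hY, tfam_mul]
  simpa [star_eq_conjTranspose, tfam_conjTranspose] using posSemidef_conjTranspose_mul_self _

end TensorFamily

section Measurement

variable {m G ι : Type*} [Fintype m] [DecidableEq m] [Fintype G] [Fintype ι]

open scoped MatrixOrder in
lemma Matrix.PosSemidef.trace_mul_nonneg {P Q : Matrix m m ℂ} (hP : P.PosSemidef)
    (hQ : Q.PosSemidef) : 0 ≤ (P * Q).trace := by
  obtain ⟨Y, rfl⟩ := CStarAlgebra.nonneg_iff_eq_star_mul_self.mp hP.nonneg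
  rw [star_eq_conjTranspose, Matrix.mul_assoc, trace_mul_comm, Matrix.mul_assoc]
  simpa [Matrix.mul_assoc] using (hQ.mul_mul_conjTranspose_same Y).trace_nonneg

lemma norm_sum_mul_trace_mul_le {M : G → Matrix m m ℂ} (hM : ∀ g, (M g).PosSemidef)
    (hMsum : ∑ g, M g = 1) {P : Matrix m m ℂ} (hP : P.PosSemidef) (v : G → ℂ)
    (hv : ∀ g, ‖v g‖ ≤ 1) : ‖∑ g, v g * (P * M g).trace‖ ≤ P.trace.re :=
  calc ‖∑ g, v g * (P * M g).trace‖
      ≤ ∑ g, ‖(P * M g).trace‖ := by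
        refine (norm_sum_le _ _).trans (sum_le_sum fun g _ => ?_)
        rw [norm_mul]
        exact mul_le_of_le_one_left (norm_nonneg _) (hv g)
    _ = (∑ g, (P * M g).trace).re := by
        rw [Complex.re_sum]
        exact sum_congr rfl fun g _ =>
          (Complex.re_eq_norm.mpr (hP.trace_mul_nonneg (hM g))).symm
    _ = P.trace.re := by rw [← trace_sum, ← Matrix.mul_sum, hMsum, Matrix.mul_one]

lemma norm_sum_mul_trace_sum_smul_mul_le {M : G → Matrix m m ℂ} (hM : ∀ g, (M g).PosSemidef)
    (hMsum : ∑ g, M g = 1) {P : ι → Matrix m m ℂ} (hP : ∀ c, (P c).PosSemidef) (a : ι → ℂ)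
    (ha : ∀ c, ‖a c‖ ≤ 1) (v : G → ℂ) (hv : ∀ g, ‖v g‖ ≤ 1) :
    ‖∑ g, v g * ((∑ c, a c • P c) * M g).trace‖ ≤ (∑ c, (P c).trace).re :=
  calc ‖∑ g, v g * ((∑ c, a c • P c) * M g).trace‖
      = ‖∑ c, a c * ∑ g, v g * (P c * M g).trace‖ := by
        simp only [Matrix.sum_mul, trace_sum, Matrix.smul_mul, trace_smul, smul_eq_mul,
          Finset.mul_sum]
        rw [sum_comm]
        exact congrArg _ (sum_congr rfl fun c _ => sum_congr rfl fun g _ => by ring)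
    _ ≤ ∑ c, (P c).trace.re := by
        refine (norm_sum_le _ _).trans (sum_le_sum fun c _ => ?_)
        rw [norm_mul]
        exact (mul_le_of_le_one_left (norm_nonneg _) (ha c)).trans
          (norm_sum_mul_trace_mul_le hM hMsum (hP c) v hv)
    _ = (∑ c, (P c).trace).re := (Complex.re_sum _ _).symm

end Measurement

lemma norm_sum_mul_trace_tfam_mul_le {d ι G : Type*} [Fintype d] [DecidableEq d] [Fintype ι]
    [Fintype G] {L : ℕ} {D : ι → Matrix d d ℂ} (hD : ∀ j, (D j).PosSemidef) (w : ι → ℂ)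
    (hw : ∀ j, ‖w j‖ ≤ 1) {M : G → Matrix (Fin L → d) (Fin L → d) ℂ}
    (hM : ∀ g, (M g).PosSemidef) (hMsum : ∑ g, M g = 1) (v : G → ℂ) (hv : ∀ g, ‖v g‖ ≤ 1) :
    ‖∑ g, v g * (tfam (fun _ : Fin L => ∑ j, w j • D j) * M g).trace‖
      ≤ ((∑ j, (D j).trace) ^ L).re := by
  have hexpand : tfam (fun _ : Fin L => ∑ j, w j • D j)
      = ∑ c : Fin L → ι, (∏ l, w (c l)) • tfam (fun l => D (c l)) :=
    (tfam_sum _).trans (sum_congr rfl fun c _ => tfam_smul _ _)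
  have htrace :
      ∑ c : Fin L → ι, (tfam (fun l => D (c l))).trace = (∑ j, (D j).trace) ^ L := by
    rw [← trace_sum, ← tfam_sum, trace_tfam, ← trace_sum, prod_const, card_fin]
  rw [hexpand, ← htrace]
  have hP : ∀ c : Fin L → ι, (tfam fun l => D (c l)).PosSemidef :=
    fun c => .tfam fun l => hD (c l)
  have ha : ∀ c : Fin L → ι, ‖∏ l, w (c l)‖ ≤ 1 := fun c => by
    rw [norm_prod]
    exact prod_le_one (fun l _ => norm_nonneg _) fun l _ => hw (c l)
  exact norm_sum_mul_trace_sum_smul_mul_le hM hMsum hP _ ha v hv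

lemma AddChar.map_sum_eq_prod {ι A M : Type*} [AddCommMonoid A] [CommMonoid M]
    (ψ : AddChar A M) (s : Finset ι) (f : ι → A) : ψ (∑ i ∈ s, f i) = ∏ i ∈ s, ψ (f i) := by
  induction s using Finset.cons_induction with
  | empty => simp
  | cons a s ha ih => rw [Finset.sum_cons, Finset.prod_cons, map_add_eq_mul, ih]

/-- The paper's `B_g^(L)`: the part of `(∑ g, A g)^⊗L` whose indices sum to `g`. -/
noncomputable def tensorConvPow {d G : Type*} [AddCommMonoid G] [Fintype G] [DecidableEq G]
    (A : G → Matrix d d ℂ) (L : ℕ) (g : G) : Matrix (Fin L → d) (Fin L → d) ℂ :=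
  ∑ c ∈ univ.filter (fun c : Fin L → G => ∑ l, c l = g), tfam (fun l => A (c l))

lemma tensorConvPow_eq_sum_addChar {d G : Type*} [AddCommGroup G] [Fintype G] [DecidableEq G]
    (A : G → Matrix d d ℂ) (L : ℕ) (g : G) :
    tensorConvPow A L g
      = (Fintype.card G : ℂ)⁻¹ •
          ∑ ψ : AddChar G ℂ, ψ (-g) • tfam (fun _ : Fin L => ∑ j, ψ j • A j) := by
  have hN : (Fintype.card G : ℂ) ≠ 0 := Nat.cast_ne_zero.mpr Fintype.card_ne_zero
  rw [eq_inv_smul_iff₀ hN]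
  simp only [tfam_sum, tfam_smul, smul_sum, smul_smul, ← AddChar.map_sum_eq_prod]
  rw [sum_comm]
  simp only [← sum_smul, ← AddChar.map_add_eq_mul, neg_add_eq_sub, AddChar.sum_apply_eq_ite,
    sub_eq_zero, ite_smul, zero_smul, ← sum_filter, tensorConvPow, smul_sum]

lemma sum_re_le_of_eq_one_of_norm_le {α : Type*} [Fintype α] [DecidableEq α] {f : α → ℂ}
    {a₀ : α} (h₀ : f a₀ = 1) {b : ℝ} (hb : ∀ a ≠ a₀, ‖f a‖ ≤ b) :
    ∑ a, (f a).re ≤ 1 + (Fintype.card α - 1) * b := by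
  rw [← add_sum_erase _ _ (mem_univ a₀), h₀, Complex.one_re]
  gcongr
  calc ∑ a ∈ univ.erase a₀, (f a).re
      ≤ ∑ a ∈ univ.erase a₀, b :=
        sum_le_sum fun a ha => (Complex.re_le_norm _).trans (hb a (ne_of_mem_erase ha))
    _ = (Fintype.card α - 1) * b := by
        rw [sum_const, card_erase_of_mem (mem_univ _), card_univ, nsmul_eq_mul,
          Nat.cast_sub (Fintype.card_pos_iff.mpr ⟨a₀⟩)]
        simp

lemma norm_sum_addChar_trace_tfam_mul_le {d G : Type*} [Fintype d] [DecidableEq d]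
    [AddCommGroup G] [Fintype G] {ψ : AddChar G ℂ} (hψ : ψ ≠ 0) {A : G → Matrix d d ℂ}
    {H : Matrix d d ℂ} (hHA : ∀ g, (H - A g).PosSemidef) {L : ℕ}
    {M : G → Matrix (Fin L → d) (Fin L → d) ℂ} (hM : ∀ g, (M g).PosSemidef)
    (hMsum : ∑ g, M g = 1) :
    ‖∑ g, ψ (-g) * (tfam (fun _ : Fin L => ∑ j, ψ j • A j) * M g).trace‖
      ≤ ((∑ j, (H - A j).trace) ^ L).re := by
  have hflip : ∑ j, ψ j • A j = (-1 : ℂ) • ∑ j, ψ j • (H - A j) := by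
    simp only [smul_sub, sum_sub_distrib, ← sum_smul, AddChar.sum_eq_zero_iff_ne_zero.mpr hψ,
      zero_smul, zero_sub, neg_one_smul, neg_neg]
  have hneg : tfam (fun _ : Fin L => ∑ j, ψ j • A j)
      = (-1 : ℂ) ^ L • tfam (fun _ : Fin L => ∑ j, ψ j • (H - A j)) := by
    rw [hflip, tfam_smul (fun _ => (-1 : ℂ)) (fun _ => _), prod_const, card_fin]
  calc ‖∑ g, ψ (-g) * (tfam (fun _ : Fin L => ∑ j, ψ j • A j) * M g).trace‖
      = ‖∑ g, ψ (-g) * (tfam (fun _ : Fin L => ∑ j, ψ j • (H - A j)) * M g).trace‖ := by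
        simp only [hneg, Matrix.smul_mul, trace_smul, smul_eq_mul,
          mul_left_comm _ ((-1 : ℂ) ^ L), ← mul_sum, norm_mul, norm_pow, norm_neg, norm_one,
          one_pow, one_mul]
    _ ≤ ((∑ j, (H - A j).trace) ^ L).re :=
        norm_sum_mul_trace_tfam_mul_le hHA _ (fun j => (ψ.norm_apply j).le) hM hMsum _
          fun g => (ψ.norm_apply _).le

theorem sum_re_trace_tensorConvPow_mul_le {d G : Type*} [Fintype d] [DecidableEq d]
    [AddCommGroup G] [Fintype G] [DecidableEq G] {A : G → Matrix d d ℂ}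
    (hAsum : ∑ g, (A g).trace = 1) {H : Matrix d d ℂ} (hHA : ∀ g, (H - A g).PosSemidef) {q : ℝ}
    (hq : H.trace = q) (L : ℕ) {M : G → Matrix (Fin L → d) (Fin L → d) ℂ}
    (hM : ∀ g, (M g).PosSemidef) (hMsum : ∑ g, M g = 1) :
    ∑ g, ((tensorConvPow A L g * M g).trace).re
      ≤ 1 / Fintype.card G + ((Fintype.card G - 1) / Fintype.card G)
          * (Fintype.card G * q - 1) ^ L := by
  set N := Fintype.card G
  set W : AddChar G ℂ → ℂ := fun ψ =>
    ∑ g, ψ (-g) * (tfam (fun _ : Fin L => ∑ j, ψ j • A j) * M g).trace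
  have hfourier : ∑ g, (tensorConvPow A L g * M g).trace = (N : ℂ)⁻¹ * ∑ ψ, W ψ := by
    simp only [W, tensorConvPow_eq_sum_addChar, Matrix.smul_mul, trace_smul, Matrix.sum_mul,
      trace_sum, smul_eq_mul, mul_sum]
    exact sum_comm
  have htrivial : W 0 = 1 := by
    simp only [W, AddChar.zero_apply, one_smul, one_mul]
    rw [← trace_sum, ← Matrix.mul_sum, hMsum, Matrix.mul_one, trace_tfam, trace_sum, hAsum,
      prod_const_one]
  have hnontrivial : ∀ ψ ≠ 0, ‖W ψ‖ ≤ (N * q - 1) ^ L := by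
    intro ψ hψ
    have hD : ∑ j, (H - A j).trace = ((N * q - 1 : ℝ) : ℂ) := by
      simp [trace_sub, sum_sub_distrib, hAsum, hq, N]
    calc ‖W ψ‖ ≤ ((∑ j, (H - A j).trace) ^ L).re :=
          norm_sum_addChar_trace_tfam_mul_le hψ hHA hM hMsum
      _ = (N * q - 1) ^ L := by rw [hD, ← Complex.ofReal_pow, Complex.ofReal_re]
  calc ∑ g, ((tensorConvPow A L g * M g).trace).re
      = (N : ℝ)⁻¹ * ∑ ψ, (W ψ).re := by
        rw [← Complex.re_sum, hfourier, ← Complex.ofReal_natCast, ← Complex.ofReal_inv,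
          Complex.re_ofReal_mul, Complex.re_sum]
    _ ≤ (N : ℝ)⁻¹ * (1 + (N - 1) * (N * q - 1) ^ L) := by
        gcongr
        simpa [AddChar.card_eq] using sum_re_le_of_eq_one_of_norm_le htrivial hnontrivial
    _ = 1 / N + ((N - 1) / N) * (N * q - 1) ^ L := by ring

lemma Fin.val_finsetSum {ι : Type*} {n : ℕ} [NeZero n] (s : Finset ι) (f : ι → Fin n) :
    (∑ i ∈ s, f i).val = (∑ i ∈ s, (f i).val) % n := by
  induction s using Finset.cons_induction with
  | empty => simp
  | cons a s ha ih =>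
    rw [Finset.sum_cons, Finset.sum_cons, Fin.val_add, ih, Nat.add_mod_mod]

theorem stmt_10_general {d : Type*} [Fintype d] [DecidableEq d] (n : ℕ) (hn : 0 < n)
    (A : Fin n → Matrix d d ℂ) (hAsum : ∑ i, (A i).trace = 1)
    (H : Matrix d d ℂ) (hHi : ∀ i, (H - A i).PosSemidef)
    (q : ℝ) (hq : H.trace = (q : ℂ)) (L : ℕ)
    (M : Fin n → Matrix (Fin L → d) (Fin L → d) ℂ)
    (hM : ∀ i, (M i).PosSemidef) (hMsum : ∑ i, M i = 1) :
    ∑ i : Fin n,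
        (((∑ c ∈ Finset.univ.filter (fun c : Fin L → Fin n => (∑ l, (c l).val) % n = (i : ℕ)),
            tfam (fun l => A (c l))) * M i).trace).re
      ≤ 1 / n + ((n - 1) / n) * ((n : ℝ) * q - 1) ^ L := by
  have : NeZero n := ⟨hn.ne'⟩
  have hB : ∀ i : Fin n,
      ∑ c ∈ univ.filter (fun c : Fin L → Fin n => (∑ l, (c l).val) % n = i),
        tfam (fun l => A (c l)) = tensorConvPow A L i := by
    intro i
    simp only [tensorConvPow, Fin.ext_iff, Fin.val_finsetSum]
  simpa only [hB, Fintype.card_fin] using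
    sum_re_trace_tensorConvPow_mul_le hAsum hHi hq L hM hMsum

/-- Theorem 4: if `H - Aᵢ ⪰ 0` with `Tr H = q ≥ 1/n`, `Σᵢ Tr Aᵢ = 1`,
`Tr Aᵢ ≥ 0`, then for `Bᵢ^(L) = Σ_{ω_n(c)=i} A_{c₁}⊗⋯⊗A_{c_L}` and any measurement `{Mᵢ}`,
`Σᵢ Tr(Bᵢ^(L) Mᵢ) ≤ 1/n + ((n-1)/n)(nq-1)^L`. -/
theorem stmt_10 {d : Type*} [Fintype d] [DecidableEq d] (n : ℕ) (hn : 0 < n)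
    (A : Fin n → Matrix d d ℂ) (hA : ∀ i, (A i).IsHermitian)
    (hAtr : ∀ i, 0 ≤ ((A i).trace).re) (hAsum : ∑ i, (A i).trace = 1)
    (H : Matrix d d ℂ) (hH : H.IsHermitian) (hHi : ∀ i, (H - A i).PosSemidef)
    (q : ℝ) (hq : H.trace = (q : ℂ)) (hq' : 1 / n ≤ q)
    (L : ℕ) (hL : 0 < L)
    (M : Fin n → Matrix (Fin L → d) (Fin L → d) ℂ)
    (hM : ∀ i, (M i).PosSemidef) (hMsum : ∑ i, M i = 1) :
    ∑ i : Fin n,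
        (((∑ c ∈ Finset.univ.filter (fun c : Fin L → Fin n => (∑ l, (c l).val) % n = (i : ℕ)),
            tfam (fun l => A (c l))) * M i).trace).re
      ≤ 1 / n + ((n - 1) / n) * ((n : ℝ) * q - 1) ^ L :=
  stmt_10_general n hn A hAsum H hHi q hq L M hM hMsum
end
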